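/- For the 1-cycle of the impulsive cascade system with parameters (λ,T), the minimum y_min = λz(τ₁,T) and maximum y_max = λz(τ₂,T) of the output over one period satisfy 0 < y_min < X₃ < y_max, where X₃ = λ C(e^{-AT}-I)^{-1}B is the output value at impulse times. -/

import Mathlib

open Matrix Set Filter

noncomputable def Acas (a₁ a₂ a₃ g₁ g₂ : ℝ) : Matrix (Fin 3) (Fin 3) ℝ :=
  !![-a₁, 0, 0; g₁, -a₂, 0; 0, g₂, -a₃]

def Bcas : Fin 3 → ℝ := ![1, 0, 0]

/-- impulse response g(t) = C e^{tA} B with C = (0,0,1) -/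
noncomputable def impResp (a₁ a₂ a₃ g₁ g₂ : ℝ) (t : ℝ) : ℝ :=
  ((NormedSpace.exp (t • Acas a₁ a₂ a₃ g₁ g₂)) *ᵥ Bcas) 2

/-- z(τ,T) = C e^{Aτ} (I - e^{AT})⁻¹ B -/
noncomputable def zfun (a₁ a₂ a₃ g₁ g₂ : ℝ) (τ T : ℝ) : ℝ :=
  ((NormedSpace.exp (τ • Acas a₁ a₂ a₃ g₁ g₂) *
    (1 - NormedSpace.exp (T • Acas a₁ a₂ a₃ g₁ g₂))⁻¹) *ᵥ Bcas) 2

noncomputable def zmaxF (a₁ a₂ a₃ g₁ g₂ T : ℝ) : ℝ :=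
  sSup ((fun τ => zfun a₁ a₂ a₃ g₁ g₂ τ T) '' Set.Icc 0 T)

noncomputable def zminF (a₁ a₂ a₃ g₁ g₂ T : ℝ) : ℝ :=
  sInf ((fun τ => zfun a₁ a₂ a₃ g₁ g₂ τ T) '' Set.Icc 0 T)

/-! Diagonalising the cascade matrix gives `z(τ) = g₁ g₂ f_τ[a₁, a₂, a₃]`, the second divided
difference of `f_τ(x) = e^{-xτ} / (1 - e^{-xT})`. Expanding `f_τ` as the geometric series
`∑ₙ e^{-x(τ + nT)}` writes `z(τ)` as a sum of divided differences of the strictly convex functions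
`x ↦ e^{-x(τ + nT)}`, so `z > 0`. Divided differences annihilate affine functions; since
`f_0 = f_T + 1` and `∂_τ f_τ` at `τ = T` exceeds its value at `τ = 0` by `x`, we get `z(0) = z(T)`
and `z'(T) = z'(0) = -g₁ g₂ T φ[a₁T, a₂T, a₃T] < 0` for the strictly convex
`φ(u) = u / (1 - e^{-u})`.
So `z` drops below `z(0) = z(T)` right after `0` and exceeds it right before `T`. -/

open Real

noncomputable def secondDivDiff (f : ℝ → ℝ) (a b c : ℝ) : ℝ :=
  f a / ((b - a) * (c - a)) + f b / ((a - b) * (c - b)) + f c / ((a - c) * (b - c))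

section SecondDivDiff

variable {f g : ℝ → ℝ} {a b c : ℝ}

lemma secondDivDiff_swap_left : secondDivDiff f a b c = secondDivDiff f b a c := by
  unfold secondDivDiff; ring

lemma secondDivDiff_swap_right : secondDivDiff f a b c = secondDivDiff f a c b := by
  unfold secondDivDiff; ring

lemma secondDivDiff_const_mul (k : ℝ) :
    secondDivDiff (fun x => k * f x) a b c = k * secondDivDiff f a b c := by
  unfold secondDivDiff; ring

lemma secondDivDiff_eq_slope_sub_slope (hab : a ≠ b) (hac : a ≠ c) (hbc : b ≠ c) :
    secondDivDiff f a b c = (slope f b c - slope f a b) / (c - a) := by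
  simp only [secondDivDiff, slope_def_field]
  field_simp
  ring

lemma secondDivDiff_comp_mul {t : ℝ} (ht : t ≠ 0) :
    secondDivDiff (fun x => f (x * t)) a b c = t ^ 2 * secondDivDiff f (a * t) (b * t) (c * t) := by
  have key : ∀ u v w : ℝ, f (u * t) / ((v - u) * (w - u)) =
      t ^ 2 * (f (u * t) / ((v * t - u * t) * (w * t - u * t))) := fun u v w => by
    rw [show (v * t - u * t) * (w * t - u * t) = t ^ 2 * ((v - u) * (w - u)) by ring,
      mul_div_assoc', mul_div_mul_left _ _ (pow_ne_zero 2 ht)]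
  simp only [secondDivDiff, mul_add, key]

lemma secondDivDiff_eq_of_eq_add_affine (hab : a ≠ b) (hac : a ≠ c) (hbc : b ≠ c) {p q : ℝ}
    (h : ∀ x ∈ ({a, b, c} : Set ℝ), f x = g x + (p * x + q)) :
    secondDivDiff f a b c = secondDivDiff g a b c := by
  simp only [secondDivDiff, h a (by simp), h b (by simp), h c (by simp)]
  field_simp
  ring

lemma secondDivDiff_const (hab : a ≠ b) (hac : a ≠ c) (hbc : b ≠ c) (k : ℝ) :
    secondDivDiff (fun _ => k) a b c = 0 := by
  unfold secondDivDiff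
  field_simp
  ring

lemma StrictConvexOn.secondDivDiff_pos_of_lt {s : Set ℝ} (hf : StrictConvexOn ℝ s f)
    (ha : a ∈ s) (hc : c ∈ s) (hab : a < b) (hbc : b < c) : 0 < secondDivDiff f a b c := by
  rw [secondDivDiff_eq_slope_sub_slope hab.ne (hab.trans hbc).ne hbc.ne, slope_def_field,
    slope_def_field]
  exact div_pos (sub_pos.2 (hf.slope_strict_mono_adjacent ha hc hab hbc))
    (sub_pos.2 (hab.trans hbc))

lemma StrictConvexOn.secondDivDiff_pos {s : Set ℝ} (hf : StrictConvexOn ℝ s f)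
    (ha : a ∈ s) (hb : b ∈ s) (hc : c ∈ s) (hab : a ≠ b) (hac : a ≠ c) (hbc : b ≠ c) :
    0 < secondDivDiff f a b c := by
  rcases hab.lt_or_gt with hab | hba <;> rcases hac.lt_or_gt with hac | hca <;>
    rcases hbc.lt_or_gt with hbc | hcb
  · exact hf.secondDivDiff_pos_of_lt ha hc hab hbc
  · rw [secondDivDiff_swap_right]; exact hf.secondDivDiff_pos_of_lt ha hb hac hcb
  · exact absurd (hca.trans hab) hbc.not_gt
  · rw [secondDivDiff_swap_right, secondDivDiff_swap_left]
    exact hf.secondDivDiff_pos_of_lt hc hb hca hab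
  · rw [secondDivDiff_swap_left]; exact hf.secondDivDiff_pos_of_lt hb hc hba hac
  · exact absurd (hcb.trans hba) hac.not_gt
  · rw [secondDivDiff_swap_left, secondDivDiff_swap_right]
    exact hf.secondDivDiff_pos_of_lt hb ha hbc hca
  · rw [secondDivDiff_swap_left, secondDivDiff_swap_right, secondDivDiff_swap_left]
    exact hf.secondDivDiff_pos_of_lt hc ha hcb hba

lemma HasSum.secondDivDiff {ι : Type*} {F : ι → ℝ → ℝ} (ha : HasSum (fun i => F i a) (f a))
    (hb : HasSum (fun i => F i b) (f b)) (hc : HasSum (fun i => F i c) (f c)) :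
    HasSum (fun i => secondDivDiff (F i) a b c) (secondDivDiff f a b c) :=
  ((ha.div_const _).add (hb.div_const _)).add (hc.div_const _)

lemma HasDerivAt.secondDivDiff {F : ℝ → ℝ → ℝ} {t : ℝ} (ha : HasDerivAt (fun s => F s a) (f a) t)
    (hb : HasDerivAt (fun s => F s b) (f b) t) (hc : HasDerivAt (fun s => F s c) (f c) t) :
    HasDerivAt (fun s => secondDivDiff (F s) a b c) (secondDivDiff f a b c) t :=
  ((ha.div_const _).add (hb.div_const _)).add (hc.div_const _)

end SecondDivDiff

lemma sub_two_add_add_two_mul_exp_neg_pos {u : ℝ} (hu : 0 < u) :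
    0 < u - 2 + (u + 2) * exp (-u) := by
  let p : ℝ → ℝ := fun v => v - 2 + (v + 2) * exp (-v)
  have hp : ∀ v, HasDerivAt p (1 - (v + 1) * exp (-v)) v := fun v =>
    (((hasDerivAt_id' v).sub_const 2).add
      (((hasDerivAt_id' v).add_const 2).fun_mul (hasDerivAt_neg v).exp)).congr_deriv (by ring)
  have hmono : StrictMonoOn p (Ici 0) := by
    refine strictMonoOn_of_deriv_pos (convex_Ici 0)
      (fun v _ => (hp v).continuousAt.continuousWithinAt) fun v hv => ?_
    rw [interior_Ici] at hv
    rw [(hp v).deriv, sub_pos, ← lt_div_iff₀ (exp_pos _), Real.exp_neg, div_inv_eq_mul, one_mul]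
    exact add_one_lt_exp hv.out.ne'
  simpa [p] using hmono self_mem_Ici hu.le hu

lemma one_sub_exp_neg_pos {u : ℝ} (hu : 0 < u) : 0 < 1 - exp (-u) :=
  sub_pos.2 (exp_lt_one_iff.2 (neg_neg_of_pos hu))

lemma strictConvexOn_div_one_sub_exp_neg :
    StrictConvexOn ℝ (Ioi 0) fun u => u / (1 - exp (-u)) := by
  have hD : ∀ u, HasDerivAt (fun v => 1 - exp (-v)) (exp (-u)) u := fun u =>
    ((hasDerivAt_neg u).exp.const_sub 1).congr_deriv (by ring)
  have hφ' : ∀ u, 0 < u → HasDerivAt (fun v => v / (1 - exp (-v)))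
      ((1 - (1 + u) * exp (-u)) / (1 - exp (-u)) ^ 2) u := fun u hu =>
    ((hasDerivAt_id' u).div (hD u) (one_sub_exp_neg_pos hu).ne').congr_deriv (by ring)
  have hφ'' : ∀ u, 0 < u → HasDerivAt (fun v => (1 - (1 + v) * exp (-v)) / (1 - exp (-v)) ^ 2)
      (exp (-u) * (u - 2 + (u + 2) * exp (-u)) / (1 - exp (-u)) ^ 3) u := fun u hu => by
    have hD0 := (one_sub_exp_neg_pos hu).ne'
    refine ((((hasDerivAt_id' u).const_add 1).fun_mul (hasDerivAt_neg u).exp).const_sub 1 |>.div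
      ((hD u).fun_pow 2) (pow_ne_zero 2 hD0)).congr_deriv ?_
    field_simp
    ring
  refine strictConvexOn_of_deriv2_pos (convex_Ioi 0)
    (fun u hu => (hφ' u hu).continuousAt.continuousWithinAt) fun u hu => ?_
  rw [interior_Ioi] at hu
  have hderiv : deriv (fun v => v / (1 - exp (-v))) =ᶠ[nhds u]
      fun v => (1 - (1 + v) * exp (-v)) / (1 - exp (-v)) ^ 2 :=
    eventually_of_mem (isOpen_Ioi.mem_nhds hu) fun v hv => (hφ' v hv).deriv
  rw [Function.iterate_succ_apply', Function.iterate_one, hderiv.deriv_eq, (hφ'' u hu).deriv]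
  have := sub_two_add_add_two_mul_exp_neg_pos hu
  have := one_sub_exp_neg_pos hu
  positivity

lemma secondDivDiff_exp_neg_mul_pos {a b c s : ℝ} (hab : a ≠ b) (hac : a ≠ c) (hbc : b ≠ c)
    (hs : s ≠ 0) : 0 < secondDivDiff (fun x => exp (-(x * s))) a b c := by
  have hs' : -s ≠ 0 := neg_ne_zero.2 hs
  have hinj := mul_left_injective₀ hs'
  simp_rw [← mul_neg]
  rw [secondDivDiff_comp_mul hs']
  exact mul_pos (sq_pos_of_ne_zero hs') (strictConvexOn_exp.secondDivDiff_pos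
    (mem_univ _) (mem_univ _) (mem_univ _) (hinj.ne hab) (hinj.ne hac) (hinj.ne hbc))

lemma secondDivDiff_exp_neg_mul_nonneg {a b c : ℝ} (hab : a ≠ b) (hac : a ≠ c) (hbc : b ≠ c)
    (s : ℝ) : 0 ≤ secondDivDiff (fun x => exp (-(x * s))) a b c := by
  rcases eq_or_ne s 0 with rfl | hs
  · simp [secondDivDiff_const hab hac hbc]
  · exact (secondDivDiff_exp_neg_mul_pos hab hac hbc hs).le

lemma hasSum_exp_neg_mul_add_nat_mul {x T : ℝ} (hxT : 0 < x * T) (τ : ℝ) :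
    HasSum (fun n : ℕ => exp (-(x * (τ + n * T)))) (exp (-(x * τ)) / (1 - exp (-(x * T)))) := by
  have h := (hasSum_geometric_of_lt_one (exp_pos _).le
    (exp_lt_one_iff.2 (neg_neg_of_pos hxT))).mul_left (exp (-(x * τ)))
  have hterm (n : ℕ) : exp (-(x * (τ + n * T))) = exp (-(x * τ)) * exp (-(x * T)) ^ n := by
    rw [← Real.exp_nat_mul, ← Real.exp_add]; ring_nf
  simpa only [hterm, div_eq_mul_inv] using h

lemma IsMinOn.lt_left_of_hasDerivAt_neg {f : ℝ → ℝ} {a b c f' : ℝ} (hmin : IsMinOn f (Icc a b) c)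
    (hab : a < b) (hf : HasDerivAt f f' a) (hf' : f' < 0) : f c < f a := by
  have hslope : ∀ᶠ y in nhdsWithin a (Ioi a), slope f a y < 0 :=
    ((hasDerivAt_iff_tendsto_slope.1 hf).mono_left
      (nhdsWithin_mono _ fun y hy => ne_of_gt hy)).eventually_lt_const hf'
  obtain ⟨y, hy, hya⟩ := (hslope.and (Ioo_mem_nhdsGT hab)).exists
  exact (isMinOn_iff.1 hmin y ⟨hya.1.le, hya.2.le⟩).trans_lt ((slope_neg_iff_of_le hya.1.le).1 hy)

lemma IsMaxOn.right_lt_of_hasDerivAt_neg {f : ℝ → ℝ} {a b c f' : ℝ} (hmax : IsMaxOn f (Icc a b) c)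
    (hab : a < b) (hf : HasDerivAt f f' b) (hf' : f' < 0) : f b < f c := by
  have hslope : ∀ᶠ y in nhdsWithin b (Iio b), slope f b y < 0 :=
    ((hasDerivAt_iff_tendsto_slope.1 hf).mono_left
      (nhdsWithin_mono _ fun y hy => ne_of_lt hy)).eventually_lt_const hf'
  obtain ⟨y, hy, hyb⟩ := (hslope.and (Ioo_mem_nhdsLT hab)).exists
  rw [slope_comm, slope_neg_iff_of_le hyb.2.le] at hy
  exact hy.trans_le (isMaxOn_iff.1 hmax y ⟨hyb.1.le, hyb.2.le⟩)

section ConjDiagonal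

variable {n : Type*} [Fintype n] [DecidableEq n] {U : Matrix n n ℝ}

lemma exp_smul_conj_diagonal (hU : IsUnit U.det) (d : n → ℝ) (t : ℝ) :
    NormedSpace.exp (t • (U * Matrix.diagonal d * U⁻¹)) =
      U * Matrix.diagonal (fun i => Real.exp (t * d i)) * U⁻¹ := by
  rw [← Matrix.smul_mul, ← Matrix.mul_smul, ← diagonal_smul,
    Matrix.exp_conj _ _ ((Matrix.isUnit_iff_isUnit_det U).2 hU), Matrix.exp_diagonal, Pi.exp_def]
  simp [Real.exp_eq_exp_ℝ]

lemma conj_diagonal_mul_inv_one_sub_conj_diagonal (hU : IsUnit U.det) (u v : n → ℝ)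
    (hv : ∀ i, v i ≠ 1) :
    U * Matrix.diagonal u * U⁻¹ * (1 - U * Matrix.diagonal v * U⁻¹)⁻¹ =
      U * Matrix.diagonal (fun i => u i / (1 - v i)) * U⁻¹ := by
  have hconj : ∀ d e : n → ℝ, U * Matrix.diagonal d * U⁻¹ * (U * Matrix.diagonal e * U⁻¹) =
      U * Matrix.diagonal (d * e) * U⁻¹ := fun d e => by
    simp only [Matrix.mul_assoc, U.nonsing_inv_mul_cancel_left _ hU,
      ← Matrix.mul_assoc (Matrix.diagonal d), diagonal_mul_diagonal]
    rfl
  have hsub : 1 - U * Matrix.diagonal v * U⁻¹ = U * Matrix.diagonal (1 - v) * U⁻¹ := by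
    rw [Pi.sub_def, ← diagonal_sub, diagonal_one', Matrix.mul_sub, Matrix.sub_mul,
      Matrix.mul_one, U.mul_nonsing_inv hU]
  have hinv : (1 - U * Matrix.diagonal v * U⁻¹)⁻¹ = U * Matrix.diagonal (1 - v)⁻¹ * U⁻¹ := by
    refine Matrix.inv_eq_right_inv ?_
    have hcancel : (1 - v) * (1 - v)⁻¹ = 1 :=
      funext fun i => mul_inv_cancel₀ (sub_ne_zero.2 (hv i).symm)
    rw [hsub, hconj, hcancel, diagonal_one', Matrix.mul_one, U.mul_nonsing_inv hU]
  rw [hinv, hconj]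
  rfl

end ConjDiagonal

noncomputable def cascadeEigenvectors (a₁ a₂ a₃ g₁ g₂ : ℝ) : Matrix (Fin 3) (Fin 3) ℝ :=
  !![1, 0, 0; g₁ / (a₂ - a₁), 1, 0; g₁ * g₂ / ((a₂ - a₁) * (a₃ - a₁)), g₂ / (a₃ - a₂), 1]

section Cascade

variable {a₁ a₂ a₃ : ℝ} (g₁ g₂ : ℝ)

lemma det_cascadeEigenvectors : (cascadeEigenvectors a₁ a₂ a₃ g₁ g₂).det = 1 := by
  simp [cascadeEigenvectors, Matrix.det_fin_three]

variable (h₁₂ : a₁ ≠ a₂) (h₁₃ : a₁ ≠ a₃) (h₂₃ : a₂ ≠ a₃)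
include h₁₂ h₁₃ h₂₃

lemma Acas_eq_conj_diagonal : Acas a₁ a₂ a₃ g₁ g₂ = cascadeEigenvectors a₁ a₂ a₃ g₁ g₂ *
    Matrix.diagonal ![-a₁, -a₂, -a₃] * (cascadeEigenvectors a₁ a₂ a₃ g₁ g₂)⁻¹ := by
  have hAP : Acas a₁ a₂ a₃ g₁ g₂ * cascadeEigenvectors a₁ a₂ a₃ g₁ g₂ =
      cascadeEigenvectors a₁ a₂ a₃ g₁ g₂ * Matrix.diagonal ![-a₁, -a₂, -a₃] := by
    ext i j
    fin_cases i <;> fin_cases j <;>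
      simp [Acas, cascadeEigenvectors, Matrix.mul_apply, Fin.sum_univ_three] <;> field_simp <;> ring
  rw [← hAP, Matrix.mul_nonsing_inv_cancel_right _ _ (by simp [det_cascadeEigenvectors])]

lemma cascadeEigenvectors_inv_mulVec_Bcas : (cascadeEigenvectors a₁ a₂ a₃ g₁ g₂)⁻¹ *ᵥ Bcas =
    ![1, -(g₁ / (a₂ - a₁)), g₁ * g₂ / ((a₃ - a₁) * (a₃ - a₂))] := by
  have hP : cascadeEigenvectors a₁ a₂ a₃ g₁ g₂ *ᵥ
      ![1, -(g₁ / (a₂ - a₁)), g₁ * g₂ / ((a₃ - a₁) * (a₃ - a₂))] = Bcas := by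
    ext i
    fin_cases i <;> simp [Bcas, cascadeEigenvectors, Matrix.mulVec, dotProduct, Fin.sum_univ_three]
    field_simp
    ring
  rw [← hP, Matrix.mulVec_mulVec, Matrix.nonsing_inv_mul _ (by simp [det_cascadeEigenvectors]),
    Matrix.one_mulVec]

lemma zfun_eq_secondDivDiff (ha₁ : a₁ ≠ 0) (ha₂ : a₂ ≠ 0) (ha₃ : a₃ ≠ 0) {T : ℝ} (hT : T ≠ 0)
    (τ : ℝ) : zfun a₁ a₂ a₃ g₁ g₂ τ T =
      g₁ * g₂ * secondDivDiff (fun x => exp (-(x * τ)) / (1 - exp (-(x * T)))) a₁ a₂ a₃ := by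
  have hdet : IsUnit (cascadeEigenvectors a₁ a₂ a₃ g₁ g₂).det := by
    simp [det_cascadeEigenvectors]
  have hv : ∀ i, exp (T * ![-a₁, -a₂, -a₃] i) ≠ 1 := by
    intro i; rw [Ne, Real.exp_eq_one_iff]; fin_cases i <;> simp [hT, ha₁, ha₂, ha₃]
  rw [zfun, Acas_eq_conj_diagonal g₁ g₂ h₁₂ h₁₃ h₂₃, exp_smul_conj_diagonal hdet,
    exp_smul_conj_diagonal hdet, conj_diagonal_mul_inv_one_sub_conj_diagonal hdet _ _ hv,
    ← Matrix.mulVec_mulVec, cascadeEigenvectors_inv_mulVec_Bcas g₁ g₂ h₁₂ h₁₃ h₂₃]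
  simp only [Matrix.mulVec, dotProduct, cascadeEigenvectors, mul_comm τ, mul_comm T,
    mul_diagonal, of_apply, cons_val', cons_val_fin_one, cons_val, cons_val_one,
    Fin.sum_univ_three, cons_val_zero, neg_mul, mul_one, mul_neg, one_mul, secondDivDiff]
  field_simp
  ring

end Cascade

noncomputable def zfunDeriv (a₁ a₂ a₃ g₁ g₂ τ T : ℝ) : ℝ :=
  g₁ * g₂ * secondDivDiff (fun x => -x * exp (-(x * τ)) / (1 - exp (-(x * T)))) a₁ a₂ a₃

section CascadeOutput

variable {a₁ a₂ a₃ g₁ g₂ T : ℝ}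

lemma one_sub_exp_neg_mul_ne_zero {x : ℝ} (hx : x ≠ 0) (hT : T ≠ 0) : 1 - exp (-(x * T)) ≠ 0 := by
  rw [sub_ne_zero, ne_comm, Ne, Real.exp_eq_one_iff, neg_eq_zero]
  exact mul_ne_zero hx hT

lemma zfun_pos (ha₁ : 0 < a₁) (ha₂ : 0 < a₂) (ha₃ : 0 < a₃) (h₁₂ : a₁ ≠ a₂) (h₁₃ : a₁ ≠ a₃)
    (h₂₃ : a₂ ≠ a₃) (hg₁ : 0 < g₁) (hg₂ : 0 < g₂) (hT : 0 < T) (τ : ℝ) :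
    0 < zfun a₁ a₂ a₃ g₁ g₂ τ T := by
  rw [zfun_eq_secondDivDiff g₁ g₂ h₁₂ h₁₃ h₂₃ ha₁.ne' ha₂.ne' ha₃.ne' hT.ne']
  have hsum : HasSum (fun n : ℕ => secondDivDiff (fun x => exp (-(x * (τ + n * T)))) a₁ a₂ a₃)
      (secondDivDiff (fun x => exp (-(x * τ)) / (1 - exp (-(x * T)))) a₁ a₂ a₃) :=
    HasSum.secondDivDiff (hasSum_exp_neg_mul_add_nat_mul (mul_pos ha₁ hT) τ)
      (hasSum_exp_neg_mul_add_nat_mul (mul_pos ha₂ hT) τ)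
      (hasSum_exp_neg_mul_add_nat_mul (mul_pos ha₃ hT) τ)
  obtain ⟨i, hi⟩ : ∃ i : ℕ, τ + i * T ≠ 0 := by
    rcases eq_or_ne τ 0 with rfl | hτ
    · exact ⟨1, by simpa using hT.ne'⟩
    · exact ⟨0, by simpa using hτ⟩
  refine mul_pos (mul_pos hg₁ hg₂) (hasSum_lt (f := 0) (i := i) (fun n => ?_) ?_ hasSum_zero hsum)
  · exact secondDivDiff_exp_neg_mul_nonneg h₁₂ h₁₃ h₂₃ _
  · exact secondDivDiff_exp_neg_mul_pos h₁₂ h₁₃ h₂₃ hi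

lemma zfun_zero_eq_zfun_self (ha₁ : a₁ ≠ 0) (ha₂ : a₂ ≠ 0) (ha₃ : a₃ ≠ 0) (h₁₂ : a₁ ≠ a₂)
    (h₁₃ : a₁ ≠ a₃) (h₂₃ : a₂ ≠ a₃) (hT : T ≠ 0) :
    zfun a₁ a₂ a₃ g₁ g₂ 0 T = zfun a₁ a₂ a₃ g₁ g₂ T T := by
  simp only [zfun_eq_secondDivDiff g₁ g₂ h₁₂ h₁₃ h₂₃ ha₁ ha₂ ha₃ hT]
  congr 1
  refine secondDivDiff_eq_of_eq_add_affine h₁₂ h₁₃ h₂₃ (p := 0) (q := 1) fun x hx => ?_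
  have hx0 : x ≠ 0 := by rcases hx with rfl | rfl | rfl <;> assumption
  have := one_sub_exp_neg_mul_ne_zero hx0 hT
  field_simp
  simp

lemma hasDerivAt_zfun (ha₁ : a₁ ≠ 0) (ha₂ : a₂ ≠ 0) (ha₃ : a₃ ≠ 0) (h₁₂ : a₁ ≠ a₂)
    (h₁₃ : a₁ ≠ a₃) (h₂₃ : a₂ ≠ a₃) (hT : T ≠ 0) (τ : ℝ) :
    HasDerivAt (fun t => zfun a₁ a₂ a₃ g₁ g₂ t T) (zfunDeriv a₁ a₂ a₃ g₁ g₂ τ T) τ := by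
  simp only [zfun_eq_secondDivDiff g₁ g₂ h₁₂ h₁₃ h₂₃ ha₁ ha₂ ha₃ hT]
  have hx (x : ℝ) : HasDerivAt (fun t => exp (-(x * t)) / (1 - exp (-(x * T))))
      (-x * exp (-(x * τ)) / (1 - exp (-(x * T)))) τ :=
    (((hasDerivAt_id' τ).const_mul x).fun_neg.exp.div_const _).congr_deriv (by ring)
  exact (HasDerivAt.secondDivDiff (F := fun t x => exp (-(x * t)) / (1 - exp (-(x * T))))
    (hx a₁) (hx a₂) (hx a₃)).const_mul _

lemma zfunDeriv_self_eq_zfunDeriv_zero (ha₁ : a₁ ≠ 0) (ha₂ : a₂ ≠ 0) (ha₃ : a₃ ≠ 0)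
    (h₁₂ : a₁ ≠ a₂) (h₁₃ : a₁ ≠ a₃) (h₂₃ : a₂ ≠ a₃) (hT : T ≠ 0) :
    zfunDeriv a₁ a₂ a₃ g₁ g₂ T T = zfunDeriv a₁ a₂ a₃ g₁ g₂ 0 T := by
  rw [zfunDeriv, zfunDeriv]
  congr 1
  refine secondDivDiff_eq_of_eq_add_affine h₁₂ h₁₃ h₂₃ (p := 1) (q := 0) fun x hx => ?_
  have hx0 : x ≠ 0 := by rcases hx with rfl | rfl | rfl <;> assumption
  have := one_sub_exp_neg_mul_ne_zero hx0 hT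
  field_simp
  simp only [mul_zero, neg_zero, exp_zero, mul_one, add_zero]
  ring

lemma zfunDeriv_zero_neg (ha₁ : 0 < a₁) (ha₂ : 0 < a₂) (ha₃ : 0 < a₃) (h₁₂ : a₁ ≠ a₂)
    (h₁₃ : a₁ ≠ a₃) (h₂₃ : a₂ ≠ a₃) (hg₁ : 0 < g₁) (hg₂ : 0 < g₂) (hT : 0 < T) :
    zfunDeriv a₁ a₂ a₃ g₁ g₂ 0 T < 0 := by
  have hφ : (fun x => -x * exp (-(x * 0)) / (1 - exp (-(x * T)))) =
      fun x => -T⁻¹ * (x * T / (1 - exp (-(x * T)))) := by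
    funext x
    field_simp
    simp
  have hinj := mul_left_injective₀ hT.ne'
  have hpos := strictConvexOn_div_one_sub_exp_neg.secondDivDiff_pos (mul_pos ha₁ hT)
    (mul_pos ha₂ hT) (mul_pos ha₃ hT) (hinj.ne h₁₂) (hinj.ne h₁₃) (hinj.ne h₂₃)
  rw [zfunDeriv, hφ, secondDivDiff_const_mul,
    secondDivDiff_comp_mul (f := fun u => u / (1 - exp (-u))) hT.ne']
  have : 0 < g₁ * g₂ * (T⁻¹ * (T ^ 2 * secondDivDiff (fun u => u / (1 - exp (-u)))
      (a₁ * T) (a₂ * T) (a₃ * T))) := by positivity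
  linarith

end CascadeOutput

theorem output_min_max_vs_X3_general (a₁ a₂ a₃ g₁ g₂ : ℝ)
    (ha₁ : 0 < a₁) (ha₂ : 0 < a₂) (ha₃ : 0 < a₃)
    (h₁₂ : a₁ ≠ a₂) (h₁₃ : a₁ ≠ a₃) (h₂₃ : a₂ ≠ a₃)
    (hg₁ : 0 < g₁) (hg₂ : 0 < g₂) (T lam τ₁ τ₂ : ℝ) (hT : 0 < T) (hlam : 0 < lam)
    (hmin : IsMinOn (fun τ => zfun a₁ a₂ a₃ g₁ g₂ τ T) (Set.Icc 0 T) τ₁)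
    (hmax : IsMaxOn (fun τ => zfun a₁ a₂ a₃ g₁ g₂ τ T) (Set.Icc 0 T) τ₂) :
    0 < lam * zfun a₁ a₂ a₃ g₁ g₂ τ₁ T ∧
    lam * zfun a₁ a₂ a₃ g₁ g₂ τ₁ T < lam * zfun a₁ a₂ a₃ g₁ g₂ T T ∧
    lam * zfun a₁ a₂ a₃ g₁ g₂ T T < lam * zfun a₁ a₂ a₃ g₁ g₂ τ₂ T := by
  have hderiv := hasDerivAt_zfun (g₁ := g₁) (g₂ := g₂) ha₁.ne' ha₂.ne' ha₃.ne' h₁₂ h₁₃ h₂₃ hT.ne'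
  have hslope₀ := zfunDeriv_zero_neg ha₁ ha₂ ha₃ h₁₂ h₁₃ h₂₃ hg₁ hg₂ hT
  have hslopeT : zfunDeriv a₁ a₂ a₃ g₁ g₂ T T < 0 :=
    (zfunDeriv_self_eq_zfunDeriv_zero ha₁.ne' ha₂.ne' ha₃.ne' h₁₂ h₁₃ h₂₃ hT.ne').trans_lt hslope₀
  have hmin_lt : zfun a₁ a₂ a₃ g₁ g₂ τ₁ T < zfun a₁ a₂ a₃ g₁ g₂ T T :=
    (hmin.lt_left_of_hasDerivAt_neg hT (hderiv 0) hslope₀).trans_eq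
      (zfun_zero_eq_zfun_self ha₁.ne' ha₂.ne' ha₃.ne' h₁₂ h₁₃ h₂₃ hT.ne')
  have hmax_gt := hmax.right_lt_of_hasDerivAt_neg hT (hderiv T) hslopeT
  exact ⟨mul_pos hlam (zfun_pos ha₁ ha₂ ha₃ h₁₂ h₁₃ h₂₃ hg₁ hg₂ hT τ₁),
    mul_lt_mul_of_pos_left hmin_lt hlam, mul_lt_mul_of_pos_left hmax_gt hlam⟩

theorem output_min_max_vs_X3 (a₁ a₂ a₃ g₁ g₂ : ℝ)
    (ha₁ : 0 < a₁) (ha₂ : 0 < a₂) (ha₃ : 0 < a₃)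
    (h₁₂ : a₁ ≠ a₂) (h₁₃ : a₁ ≠ a₃) (h₂₃ : a₂ ≠ a₃)
    (hg₁ : 0 < g₁) (hg₂ : 0 < g₂) (T lam τ₁ τ₂ : ℝ) (hT : 0 < T) (hlam : 0 < lam)
    (hτ₁ : 0 < τ₁) (hτ₁₂ : τ₁ < τ₂) (hτ₂ : τ₂ < T)
    (hmin : IsMinOn (fun τ => zfun a₁ a₂ a₃ g₁ g₂ τ T) (Set.Icc 0 T) τ₁)
    (hmax : IsMaxOn (fun τ => zfun a₁ a₂ a₃ g₁ g₂ τ T) (Set.Icc 0 T) τ₂) :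
    0 < lam * zfun a₁ a₂ a₃ g₁ g₂ τ₁ T ∧
    lam * zfun a₁ a₂ a₃ g₁ g₂ τ₁ T < lam * zfun a₁ a₂ a₃ g₁ g₂ T T ∧
    lam * zfun a₁ a₂ a₃ g₁ g₂ T T < lam * zfun a₁ a₂ a₃ g₁ g₂ τ₂ T :=
  output_min_max_vs_X3_general a₁ a₂ a₃ g₁ g₂ ha₁ ha₂ ha₃ h₁₂ h₁₃ h₂₃ hg₁ hg₂ T lam τ₁ τ₂ hT hlam
    hmin hmax
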